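/- arXiv:1211.4517 — 7 statements merged into one kernel-verified Lean document; each statement's English description precedes it below -/
import Mathlib

section
/- Let (A,I) be a finite independence alphabet with |A| = N, let m = N!, and let φ be an endomorphism of the trace monoid M(A,I). Then Per φ = Fix φ^m, i.e., every periodic point of φ is a fixed point of the m-th iterate of φ. -/
/-- The defining relation of the trace monoid: `ab = ba` whenever `(a,b) ∈ I`. -/
def traceRel (A : Type) (I : A → A → Prop) : FreeMonoid A → FreeMonoid A → Prop :=
  fun x y => ∃ a b : A, I a b ∧ x = FreeMonoid.of a * FreeMonoid.of b ∧
    y = FreeMonoid.of b * FreeMonoid.of a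

/-- The congruence on the free monoid generated by the trace relations. -/
def traceCon (A : Type) (I : A → A → Prop) : Con (FreeMonoid A) :=
  conGen (traceRel A I)

/-- The trace monoid `M(A,I)`, the quotient of the free monoid on `A` by the
congruence generated by `{(ab, ba) : (a,b) ∈ I}`. -/
abbrev TraceMonoid (A : Type) (I : A → A → Prop) := (traceCon A I).Quotient

/-!
Call a letter mortal if some power of `φ` erases it. Erasing the mortal letters is a projection
`π` onto the trace monoid over the remaining letters which conjugates `φ` to an endomorphism `ψ`
erasing no letter. Once `φ ^ K` erases every mortal letter, `φ ^ K ∘ ι ∘ π = φ ^ K` for the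
inclusion `ι`, so a periodic point `x` of `φ` is fixed by `φ ^ m` as soon as `π x` is fixed by
`ψ ^ m`. For an endomorphism erasing no letter the length is non-decreasing, hence constant on a
periodic orbit, so every letter occurring in the orbit is sent to a single letter. This defines a
surjection, hence a permutation, of a set of at most `|A|` letters, whose `|A|!`-th power is the
identity.
-/

open Function

theorem Function.Surjective.iterate_factorial_eq_id {α : Type*} [Finite α] {g : α → α}
    (hg : Surjective g) {N : ℕ} (hN : Nat.card α ≤ N) : g^[N.factorial] = id := by
  let e := Equiv.ofBijective g hg.bijective_of_finite
  have he : e ^ N.factorial = 1 := orderOf_dvd_iff_pow_eq_one.mp <|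
    (orderOf_dvd_natCard e).trans (Nat.card_perm (α := α) ▸ Nat.factorial_dvd_factorial hN)
  rw [← Equiv.coe_ofBijective g hg.bijective_of_finite, ← Equiv.Perm.coe_pow, he]
  rfl

theorem Function.eq_of_le_apply_of_mem_periodicPts {α β : Type*} [PartialOrder β] {f : α → α}
    {ℓ : α → β} (hℓ : ∀ y, ℓ y ≤ ℓ (f y)) {x : α} (hx : x ∈ periodicPts f) :
    ℓ (f x) = ℓ x := by
  obtain ⟨n, hn, hxn⟩ := mem_periodicPts.mp hx
  have hmono : ∀ k y, ℓ y ≤ ℓ (f^[k] y) := fun k => by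
    induction k with
    | zero => exact fun _ => le_rfl
    | succ k ih => exact fun y => (hℓ y).trans (iterate_succ_apply f k y ▸ ih (f y))
  refine le_antisymm ?_ (hℓ x)
  calc ℓ (f x) ≤ ℓ (f^[n - 1] (f x)) := hmono _ _
    _ = ℓ x := by rw [← iterate_succ_apply, Nat.succ_eq_add_one, Nat.sub_add_cancel hn, hxn.eq]

theorem Function.Semiconj.isPeriodicPt_of_map {α β : Type*} {f : α → α} {g : β → β}
    {π : α → β} {ι : β → α} {K m : ℕ} {x : α} (hπ : Semiconj π f g)
    (hι : ∀ y, f^[K] (ι (π y)) = f^[K] y) (hx : x ∈ periodicPts f)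
    (hgx : IsPeriodicPt g m (π x)) : IsPeriodicPt f m x := by
  obtain ⟨n, hn, hxn⟩ := mem_periodicPts.mp hx
  obtain ⟨j, hj⟩ : ∃ j, n * K = j + K :=
    ⟨n * K - K, (Nat.sub_add_cancel (Nat.le_mul_of_pos_left K hn)).symm⟩
  have hret : ∀ y, f^[n * K] (ι (π y)) = f^[n * K] y := fun y => by
    rw [hj, iterate_add_apply, iterate_add_apply, hι]
  have hxK : f^[n * K] x = x := (hxn.mul_const K).eq
  calc f^[m] x = f^[n * K] (f^[m] x) := by
        rw [← (Commute.iterate_iterate_self f m (n * K)).eq, hxK]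
    _ = f^[n * K] (ι (g^[m] (π x))) := by rw [← hret, (hπ.iterate_right m).eq]
    _ = x := by rw [hgx.eq, hret, hxK]

namespace TraceMonoid

variable {A : Type} {I : A → A → Prop}

def of (a : A) : TraceMonoid A I := (traceCon A I).mk' (FreeMonoid.of a)

@[elab_as_elim]
theorem induction_on {p : TraceMonoid A I → Prop} (u : TraceMonoid A I) (one : p 1)
    (of_mul : ∀ a u, p u → p (of a * u)) : p u := by
  obtain ⟨w, rfl⟩ := Con.mk'_surjective u
  induction w using FreeMonoid.inductionOn' with
  | one => exact one
  | of_mul a w ih => rw [map_mul]; exact of_mul a _ ih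

theorem commute_of {a b : A} (h : I a b) : Commute (of a : TraceMonoid A I) (of b) := by
  simp only [Commute, SemiconjBy, of, ← map_mul]
  exact (Con.eq _).mpr (ConGen.Rel.of _ _ ⟨a, b, h, rfl, rfl⟩)

def lift {M : Type*} [Monoid M] (f : A → M) (hf : ∀ a b, I a b → Commute (f a) (f b)) :
    TraceMonoid A I →* M :=
  (traceCon A I).lift (FreeMonoid.lift f) <| Con.conGen_le.mpr <| by
    rintro _ _ ⟨a, b, hab, rfl, rfl⟩
    simpa [Con.ker_rel] using (hf a b hab).eq

@[simp]
theorem lift_of {M : Type*} [Monoid M] (f : A → M) (hf : ∀ a b, I a b → Commute (f a) (f b))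
    (a : A) : lift f hf (of a) = f a :=
  FreeMonoid.lift_eval_of f a

def content (u : TraceMonoid A I) : Multiset A :=
  (lift (fun a => Multiplicative.ofAdd ({a} : Multiset A)) (fun _ _ _ => Commute.all _ _) u).toAdd

@[simp] theorem content_one : content (1 : TraceMonoid A I) = 0 := by simp [content]

@[simp] theorem content_mul (u v : TraceMonoid A I) : content (u * v) = content u + content v := by
  simp [content]

@[simp] theorem content_of (a : A) : content (of a : TraceMonoid A I) = {a} := by simp [content]

@[simp] theorem content_eq_zero {u : TraceMonoid A I} : content u = 0 ↔ u = 1 := by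
  refine ⟨fun h => ?_, fun h => h ▸ content_one⟩
  induction u using induction_on with
  | one => rfl
  | of_mul a u _ => simp at h

theorem of_ne_one (a : A) : (of a : TraceMonoid A I) ≠ 1 := by
  simp [← content_eq_zero]

theorem exists_eq_of_card_content_eq_one {u : TraceMonoid A I} (h : (content u).card = 1) :
    ∃ a, u = of a := by
  induction u using induction_on with
  | one => simp at h
  | of_mul a u _ =>
    refine ⟨a, ?_⟩
    simp_all [Multiset.card_eq_zero]

theorem exists_eq_mul_of_mul_of_mem_content {u : TraceMonoid A I} {a : A} (ha : a ∈ content u) :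
    ∃ v w, u = v * of a * w := by
  induction u using induction_on with
  | one => simp at ha
  | of_mul b u ih =>
    rcases Multiset.mem_add.mp (content_mul _ _ ▸ ha) with hb | hu
    · rw [content_of, Multiset.mem_singleton] at hb
      exact ⟨1, u, by rw [hb, one_mul]⟩
    · obtain ⟨v, w, rfl⟩ := ih hu
      exact ⟨of b * v, w, by simp only [mul_assoc]⟩

section Hom

variable {B : Type} {J : B → B → Prop} {F : Type*}
  [FunLike F (TraceMonoid A I) (TraceMonoid B J)]
  [MonoidHomClass F (TraceMonoid A I) (TraceMonoid B J)]

theorem content_map (f : F) (u : TraceMonoid A I) :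
    content (f u) = (content u).bind fun a => content (f (of a)) := by
  induction u using induction_on with
  | one => simp
  | of_mul a u ih => rw [map_mul, content_mul, content_mul, ih, content_of]; simp

theorem map_eq_one_iff (f : F) {u : TraceMonoid A I} :
    f u = 1 ↔ ∀ a ∈ content u, f (of a) = 1 := by
  rw [← content_eq_zero, content_map]
  simp only [← content_eq_zero (u := f (of _)), Multiset.eq_zero_iff_forall_notMem,
    Multiset.mem_bind]
  grind

end Hom

theorem apply_eq_self_of_forall_mem_content {F : Type*}
    [FunLike F (TraceMonoid A I) (TraceMonoid A I)]
    [MonoidHomClass F (TraceMonoid A I) (TraceMonoid A I)] (f : F) {u : TraceMonoid A I}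
    (h : ∀ a ∈ content u, f (of a) = of a) : f u = u := by
  induction u using induction_on with
  | one => exact map_one f
  | of_mul a u ih =>
    simp only [content_mul, content_of, Multiset.mem_add, Multiset.mem_singleton] at h
    rw [map_mul, h a (.inl rfl), ih fun b hb => h b (.inr hb)]

section Restrict

variable (p : A → Prop)

def incl : TraceMonoid {a // p a} (I on (↑)) →* TraceMonoid A I :=
  lift (fun b => of b.1) fun _ _ h => commute_of h

@[simp] theorem incl_of (b : {a // p a}) : incl (I := I) p (of b) = of b.1 := lift_of _ _ _

variable [DecidablePred p]

def proj : TraceMonoid A I →* TraceMonoid {a // p a} (I on (↑)) :=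
  lift (fun a => if h : p a then of ⟨a, h⟩ else 1) fun a b hab => by
    by_cases ha : p a <;> by_cases hb : p b <;> simp only [ha, hb, dite_true, dite_false,
      Commute.one_left, Commute.one_right]
    exact commute_of (I := I on Subtype.val) (a := ⟨a, ha⟩) (b := ⟨b, hb⟩) hab

theorem proj_of (a : A) :
    proj (I := I) p (of a) = if h : p a then of ⟨a, h⟩ else 1 := lift_of _ _ _

theorem proj_eq_one_iff {u : TraceMonoid A I} : proj p u = 1 ↔ ∀ a ∈ content u, ¬ p a := by
  refine (map_eq_one_iff _).trans (forall₂_congr fun a _ => ?_)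
  by_cases ha : p a <;> simp [proj_of, ha, of_ne_one]

theorem map_incl_proj {M F : Type*} [Monoid M] [FunLike F (TraceMonoid A I) M]
    [MonoidHomClass F (TraceMonoid A I) M] (f : F) (hf : ∀ a, ¬ p a → f (of a) = 1)
    (u : TraceMonoid A I) : f (incl p (proj p u)) = f u := by
  induction u using induction_on with
  | one => simp
  | of_mul a u ih =>
    by_cases ha : p a <;> simp [proj_of, ha, ih, hf]

def restrictEnd (φ : Monoid.End (TraceMonoid A I)) :
    Monoid.End (TraceMonoid {a // p a} (I on (↑))) :=
  (proj p).comp ((φ : TraceMonoid A I →* TraceMonoid A I).comp (incl p))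

theorem restrictEnd_of (φ : Monoid.End (TraceMonoid A I)) (b : {a // p a}) :
    restrictEnd p φ (of b) = proj p (φ (of b.1)) :=
  congrArg (proj p ∘ φ) (incl_of p b)

theorem semiconj_proj_restrictEnd {φ : Monoid.End (TraceMonoid A I)}
    (hφ : ∀ a, ¬ p a → proj p (φ (of a)) = 1) : Semiconj (proj p) φ (restrictEnd p φ) := by
  intro u
  induction u using induction_on with
  | one => simp
  | of_mul a u ih =>
    by_cases ha : p a <;> simp [proj_of, ha, ih, hφ, restrictEnd_of]

end Restrict

section NonErasing

variable {φ : Monoid.End (TraceMonoid A I)}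

theorem card_content_le_card_content_apply (hφ : ∀ a, φ (of a) ≠ 1) (u : TraceMonoid A I) :
    (content u).card ≤ (content (φ u)).card := by
  induction u using induction_on with
  | one => simp
  | of_mul a u ih =>
    have : (content (φ (of a))).card ≠ 0 := by simpa using hφ a
    simp only [map_mul, content_mul, content_of, Multiset.card_add, Multiset.card_singleton]
    omega

-- Each letter of `u` contributes at least one letter to `φ u`, so none can contribute two.
theorem exists_apply_of_eq_of (hφ : ∀ a, φ (of a) ≠ 1) {u : TraceMonoid A I}
    (hu : (content (φ u)).card ≤ (content u).card) {a : A} (ha : a ∈ content u) :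
    ∃ b, φ (of a) = of b := by
  obtain ⟨v, w, rfl⟩ := exists_eq_mul_of_mul_of_mem_content ha
  have hv := card_content_le_card_content_apply hφ v
  have hw := card_content_le_card_content_apply hφ w
  have : (content (φ (of a))).card ≠ 0 := by simpa using hφ a
  simp only [map_mul, content_mul, content_of, Multiset.card_add, Multiset.card_singleton] at hu
  exact exists_eq_of_card_content_eq_one (by omega)

theorem isPeriodicPt_factorial_of_ne_one [Finite A] (hφ : ∀ a, φ (of a) ≠ 1)
    {x : TraceMonoid A I} (hx : x ∈ periodicPts φ) {N : ℕ} (hN : Nat.card A ≤ N) :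
    IsPeriodicPt φ N.factorial x := by
  obtain ⟨n, hn, hxn⟩ := mem_periodicPts.mp hx
  let S := {a // ∃ k, a ∈ content (φ^[k] x)}
  have hletter : ∀ a : S, ∃ b : S, φ (of a.1) = of b.1 := by
    rintro ⟨a, k, hk⟩
    have hlen := eq_of_le_apply_of_mem_periodicPts (card_content_le_card_content_apply hφ)
      (mk_mem_periodicPts hn (hxn.apply_iterate k))
    obtain ⟨b, hb⟩ := exists_apply_of_eq_of hφ hlen.le hk
    refine ⟨⟨b, k + 1, ?_⟩, hb⟩
    rw [iterate_succ_apply' (⇑φ), content_map, Multiset.mem_bind]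
    exact ⟨a, hk, by simp [hb]⟩
  choose g hg using hletter
  have hsurj : Surjective g := by
    rintro ⟨b, k, hk⟩
    have hb : b ∈ content (φ (φ^[k + n - 1] x)) := by
      rwa [← iterate_succ_apply' (⇑φ), Nat.succ_eq_add_one, Nat.sub_add_cancel (by omega),
        iterate_add_apply, hxn.eq]
    obtain ⟨a, ha, hab⟩ := Multiset.mem_bind.mp (content_map φ _ ▸ hb)
    rw [hg ⟨a, _, ha⟩, content_of, Multiset.mem_singleton] at hab
    exact ⟨_, Subtype.ext hab.symm⟩
  have hiter : ∀ j (a : S), φ^[j] (of a.1) = of (g^[j] a).1 := by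
    intro j
    induction j with
    | zero => exact fun _ => rfl
    | succ j ih => intro a; rw [iterate_succ_apply, hg, ih, iterate_succ_apply]
  refine apply_eq_self_of_forall_mem_content (φ ^ N.factorial) fun a ha => ?_
  rw [Monoid.End.coe_pow, hiter _ ⟨a, 0, ha⟩,
    hsurj.iterate_factorial_eq_id ((Finite.card_subtype_le _).trans hN)]
  rfl

end NonErasing

section Erasing

variable [Finite A] (φ : Monoid.End (TraceMonoid A I))

-- The sets of letters erased by `φ ^ k` increase with `k`, so in a finite alphabet they stabilize.
theorem exists_pow_succ_apply_of_eq_one_imp :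
    ∃ K, ∀ a, (φ ^ (K + 1)) (of a) = 1 → (φ ^ K) (of a) = 1 := by
  have : ∀ a, ∀ᶠ K in Filter.atTop, (φ ^ (K + 1)) (of a) = 1 → (φ ^ K) (of a) = 1 := by
    intro a
    by_cases h : ∃ k, (φ ^ k) (of a) = 1
    · obtain ⟨k, hk⟩ := h
      filter_upwards [Filter.eventually_ge_atTop k] with K hK _
      rw [← Nat.sub_add_cancel hK, pow_add, Monoid.End.coe_mul, comp_apply, hk, map_one]
    · exact .of_forall fun K hK => absurd ⟨K + 1, hK⟩ h
  exact (Filter.eventually_all.mpr this).exists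

theorem isPeriodicPt_factorial_card {x : TraceMonoid A I} (hx : x ∈ periodicPts φ) :
    IsPeriodicPt φ (Nat.card A).factorial x := by
  classical
  obtain ⟨K, hK⟩ := exists_pow_succ_apply_of_eq_one_imp φ
  -- By the choice of `K`, `p a` holds iff no power of `φ` erases `a`.
  let p : A → Prop := fun a => (φ ^ K) (of a) ≠ 1
  have hpow_apply : ∀ u, (φ ^ K) (φ u) = φ ((φ ^ K) u) := Commute.iterate_self φ K
  have hsemi : Semiconj (proj p) φ (restrictEnd p φ) := by
    refine semiconj_proj_restrictEnd p fun a ha => (proj_eq_one_iff p).mpr fun c hc => ?_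
    refine not_not.mpr ((map_eq_one_iff (φ ^ K)).mp ?_ c hc)
    rw [hpow_apply, not_not.mp ha, map_one]
  have hne : ∀ b, restrictEnd p φ (of b) ≠ 1 := by
    intro b hb
    rw [restrictEnd_of, proj_eq_one_iff] at hb
    refine b.2 (hK b.1 ?_)
    rw [pow_succ, Monoid.End.coe_mul, comp_apply, map_eq_one_iff]
    exact fun c hc => not_not.mp (hb c hc)
  exact hsemi.isPeriodicPt_of_map (map_incl_proj p (φ ^ K) fun a => not_not.mp) hx <|
    isPeriodicPt_factorial_of_ne_one hne (hsemi.mapsTo_periodicPts hx) (Finite.card_subtype_le p)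

end Erasing

end TraceMonoid

theorem per_eq_fix_pow_factorial_general (A : Type) [Fintype A] (I : A → A → Prop)
    (φ : Monoid.End (TraceMonoid A I)) :
    ∀ x : TraceMonoid A I,
      (∃ n : ℕ, 1 ≤ n ∧ (φ ^ n) x = x) ↔
        (φ ^ Nat.factorial (Fintype.card A)) x = x := by
  intro x
  rw [Fintype.card_eq_nat_card]
  exact ⟨fun ⟨n, hn, hx⟩ =>
    TraceMonoid.isPeriodicPt_factorial_card φ (mk_mem_periodicPts hn hx),
    fun h => ⟨_, Nat.factorial_pos _, h⟩⟩

/-- For `m = |A|!`, the periodic points of an endomorphism `φ` of the trace monoid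
`M(A,I)` are exactly the fixed points of `φ^m`. -/
theorem per_eq_fix_pow_factorial (A : Type) [Fintype A] (I : A → A → Prop)
    (hsym : Symmetric I) (hirr : Irreflexive I)
    (φ : Monoid.End (TraceMonoid A I)) :
    ∀ x : TraceMonoid A I,
      (∃ n : ℕ, 1 ≤ n ∧ (φ ^ n) x = x) ↔
        (φ ^ Nat.factorial (Fintype.card A)) x = x :=
  per_eq_fix_pow_factorial_general A I φ
end

section
/- Let (A,I) be a finite independence alphabet and let φ be an endomorphism of the trace monoid M(A,I) such that φ restricted to A is a permutation of A. Let 𝓑 be the set of all cliques B ⊆ A such that φ(B) = B (setwise). Then Fix φ is exactly the submonoid of M(A,I) generated by {w_B : B ∈ 𝓑}. -/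
/-- The image in the trace monoid of a letter `a ∈ A`. -/
def traceOf (A : Type) (I : A → A → Prop) (a : A) : TraceMonoid A I :=
  (traceCon A I).mk' (FreeMonoid.of a)

/-- The submonoid of fixed points of an endomorphism. -/
def fixedSubmonoid {M : Type*} [Monoid M] (φ : M →* M) : Submonoid M where
  carrier := {x | φ x = x}
  mul_mem' := by
    intro a b ha hb
    simp only [Set.mem_setOf_eq] at *
    rw [map_mul, ha, hb]
  one_mem' := map_one φ

/-- A clique of the independence graph: a nonempty set of letters that pairwise
commute (are pairwise independent). -/
def IsClique (A : Type) (I : A → A → Prop) (B : Finset A) : Prop :=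
  B.Nonempty ∧ ∀ a ∈ B, ∀ b ∈ B, a ≠ b → I a b

/-- `w_B`: the product in the trace monoid of all letters of `B`. -/
noncomputable def wB (A : Type) (I : A → A → Prop) (B : Finset A) : TraceMonoid A I :=
  (B.toList.map (traceOf A I)).prod

/-!
Two words represent the same trace iff they are permutations of each other with the same
projection onto every pair `{c, d}` of dependent letters. Hence `M(A,I)` is left cancellative and
satisfies Levi's lemma: `a s = b t` with `a ≠ b` forces `(a,b) ∈ I` and `t ∈ a M`. So the first
letters of a trace `t ≠ 1` form a clique `B` with `t = w_B s`. If `φ t = t`, then `t = σ(a) φ(s')`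
whenever `t = a s'`, so `σ(B) = B`; the letters of `B` commute, so `φ w_B = w_B`, and
cancellation gives `φ s = s`. Induction on the length of `t` concludes.
-/

namespace TraceMonoid

variable {A : Type} {I : A → A → Prop}

variable (I) in
def ofList (x : List A) : TraceMonoid A I := (traceCon A I).mk' (FreeMonoid.ofList x)

@[simp]
lemma ofList_nil : ofList I ([] : List A) = 1 := map_one _

lemma ofList_append (x y : List A) : ofList I (x ++ y) = ofList I x * ofList I y := by
  rw [ofList, FreeMonoid.ofList_append, map_mul]
  rfl

@[simp]
lemma ofList_cons (a : A) (x : List A) : ofList I (a :: x) = traceOf A I a * ofList I x :=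
  ofList_append [a] x

lemma ofList_eq_prod (x : List A) : ofList I x = (x.map (traceOf A I)).prod := by
  induction x with
  | nil => rfl
  | cons a x ih => rw [ofList_cons, ih, List.map_cons, List.prod_cons]

lemma wB_eq_ofList (B : Finset A) : wB A I B = ofList I B.toList :=
  (ofList_eq_prod _).symm

lemma ofList_surjective : Function.Surjective (ofList I) := fun t => by
  obtain ⟨w, rfl⟩ := Con.mk'_surjective t
  exact ⟨w.toList, rfl⟩

lemma commute_traceOf {a b : A} (h : I a b) : Commute (traceOf A I a) (traceOf A I b) :=
  (Con.eq _).mpr (ConGen.Rel.of _ _ ⟨a, b, h, rfl, rfl⟩)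

lemma ofList_append_cons_of_indep {a : A} {p : List A} (hp : ∀ c ∈ p, I c a) (q : List A) :
    ofList I (p ++ a :: q) = traceOf A I a * ofList I (p ++ q) := by
  have hcomm : Commute (ofList I p) (traceOf A I a) := by
    rw [ofList_eq_prod]
    exact Commute.list_prod_left _ _
      (List.forall_mem_map.mpr fun c hc => commute_traceOf (hp c hc))
  rw [ofList_append, ofList_cons, hcomm.left_comm, ofList_append]

lemma rel_of_ofList_eq (R : List A → List A → Prop) (hR : Equivalence R)
    (happend : ∀ {x y u v}, R x y → R u v → R (x ++ u) (y ++ v))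
    (hswap : ∀ a b, I a b → R [a, b] [b, a]) {x y : List A} (h : ofList I x = ofList I y) :
    R x y := by
  suffices ∀ u v, ConGen.Rel (traceRel A I) u v → R u.toList v.toList from
    this _ _ ((Con.eq _).mp h)
  intro u v huv
  induction huv with
  | of _ _ h =>
    obtain ⟨a, b, hab, rfl, rfl⟩ := h
    exact hswap a b hab
  | refl => exact hR.refl _
  | symm _ ih => exact hR.symm ih
  | trans _ _ ih₁ ih₂ => exact hR.trans ih₁ ih₂
  | mul _ _ ih₁ ih₂ => exact happend ih₁ ih₂

lemma perm_of_ofList_eq {x y : List A} (h : ofList I x = ofList I y) : x.Perm y :=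
  rel_of_ofList_eq _ (List.Perm.eqv A) List.Perm.append (fun a b _ => List.Perm.swap b a []) h

lemma filter_eq_of_filter_cons_eq {P : A → Bool} {a : A} {u v : List A}
    (h : (a :: u).filter P = (a :: v).filter P) : u.filter P = v.filter P := by
  by_cases ha : P a
  · simpa [List.filter_cons_of_pos ha] using h
  · simpa [List.filter_cons_of_neg ha] using h

section Filter

variable [DecidableEq A]

lemma filter_eq_of_ofList_eq (hsym : Symmetric I) {c d : A} (hcd : ¬ I c d) {x y : List A}
    (h : ofList I x = ofList I y) :
    x.filter (fun e => e = c ∨ e = d) = y.filter (fun e => e = c ∨ e = d) := by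
  refine rel_of_ofList_eq (fun x y => x.filter _ = y.filter _)
    ⟨fun _ => rfl, Eq.symm, Eq.trans⟩
    (fun hxy huv => by rw [List.filter_append, List.filter_append, hxy, huv])
    (fun a b hab => ?_) h
  rcases eq_or_ne a b with rfl | hne
  · rfl
  have hnot : ¬ ((a = c ∨ a = d) ∧ (b = c ∨ b = d)) := by
    rintro ⟨rfl | rfl, rfl | rfl⟩
    exacts [hne rfl, hcd hab, hcd (hsym hab), hne rfl]
  by_cases ha : a = c ∨ a = d <;> by_cases hb : b = c ∨ b = d <;> simp_all

lemma filter_cons_ne_filter_append {a c : A} {p : List A} (hap : a ∉ p) (hcp : c ∈ p)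
    (x q : List A) :
    (a :: x).filter (fun e => e = c ∨ e = a) ≠
      (p ++ a :: q).filter (fun e => e = c ∨ e = a) := by
  intro h
  obtain ⟨e, l, hpl⟩ := List.exists_cons_of_ne_nil
    (List.ne_nil_of_mem (List.mem_filter.mpr ⟨hcp, by simp⟩) :
      p.filter (fun e => e = c ∨ e = a) ≠ [])
  rw [List.filter_append, hpl, List.filter_cons_of_pos (by simp), List.cons_append,
    List.cons.injEq] at h
  exact hap (h.1 ▸ (List.mem_filter.mp (hpl ▸ List.mem_cons_self)).1)

theorem ofList_eq_of_perm_of_filter_eq (hsym : Symmetric I) :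
    ∀ {x y : List A}, x.Perm y →
      (∀ c d, ¬ I c d →
        x.filter (fun e => e = c ∨ e = d) = y.filter (fun e => e = c ∨ e = d)) →
        ofList I x = ofList I y
  | [], _, hxy, _ => by rw [hxy.nil_eq]
  | a :: u, _, hxy, hfilter => by
    obtain ⟨p, q, rfl, hap⟩ := List.eq_append_cons_of_mem (hxy.subset List.mem_cons_self)
    have hindep : ∀ c ∈ p, I c a := fun c hc =>
      by_contra fun hca => filter_cons_ne_filter_append hap hc u q (hfilter c a hca)
    have hpull : ofList I (p ++ a :: q) = ofList I (a :: (p ++ q)) := by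
      rw [ofList_append_cons_of_indep hindep, ofList_cons]
    rw [hpull, ofList_cons, ofList_cons]
    refine congrArg _ (ofList_eq_of_perm_of_filter_eq hsym
      (hxy.trans List.perm_middle).cons_inv fun c d hcd => ?_)
    exact filter_eq_of_filter_cons_eq
      ((hfilter c d hcd).trans (filter_eq_of_ofList_eq hsym hcd hpull))

end Filter

theorem traceOf_mul_left_cancel (hsym : Symmetric I) {a : A} {s t : TraceMonoid A I}
    (h : traceOf A I a * s = traceOf A I a * t) : s = t := by
  classical
  obtain ⟨x, rfl⟩ := ofList_surjective s
  obtain ⟨y, rfl⟩ := ofList_surjective t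
  rw [← ofList_cons, ← ofList_cons] at h
  exact ofList_eq_of_perm_of_filter_eq hsym (perm_of_ofList_eq h).cons_inv fun c d hcd =>
    filter_eq_of_filter_cons_eq (filter_eq_of_ofList_eq hsym hcd h)

theorem isLeftCancelMul (hsym : Symmetric I) : IsLeftCancelMul (TraceMonoid A I) where
  mul_left_cancel u s t h := by
    obtain ⟨x, rfl⟩ := ofList_surjective u
    induction x with
    | nil => simpa using h
    | cons a x ih => exact ih (traceOf_mul_left_cancel hsym (by simpa [mul_assoc] using h))

/-- Levi's lemma for letters. -/
theorem indep_and_exists_of_traceOf_mul_eq (hsym : Symmetric I) {a b : A}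
    {s t : TraceMonoid A I} (hab : a ≠ b) (h : traceOf A I a * s = traceOf A I b * t) :
    I a b ∧ ∃ r, t = traceOf A I a * r := by
  classical
  obtain ⟨x, rfl⟩ := ofList_surjective s
  obtain ⟨y, rfl⟩ := ofList_surjective t
  rw [← ofList_cons, ← ofList_cons] at h
  obtain ⟨p, q, hpq, hap⟩ := List.eq_append_cons_of_mem
    ((perm_of_ofList_eq h).subset List.mem_cons_self)
  have hindep : ∀ c ∈ p, I c a := fun c hc => by_contra fun hca =>
    filter_cons_ne_filter_append hap hc x q (hpq ▸ filter_eq_of_ofList_eq hsym hca h)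
  obtain ⟨p, rfl⟩ : ∃ p', p = b :: p' := by
    rcases p with _ | ⟨e, p⟩
    · exact absurd (List.cons.inj hpq).1 hab.symm
    · exact ⟨p, by rw [(List.cons.inj hpq).1]⟩
  rw [List.cons_append, List.cons.injEq] at hpq
  refine ⟨hsym (hindep b List.mem_cons_self), ofList I (p ++ q), ?_⟩
  rw [hpq.2,
    ofList_append_cons_of_indep fun c hc => hindep c (List.mem_cons_of_mem _ hc)]

theorem exists_eq_prod_mul (hsym : Symmetric I) {l : List A} (hl : l.Nodup)
    {t : TraceMonoid A I} (h : ∀ a ∈ l, ∃ s, t = traceOf A I a * s) :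
    ∃ s, t = (l.map (traceOf A I)).prod * s := by
  induction l generalizing t with
  | nil => exact ⟨t, by simp⟩
  | cons a l ih =>
    obtain ⟨hal, hl⟩ := List.nodup_cons.mp hl
    obtain ⟨s, rfl⟩ := h a List.mem_cons_self
    obtain ⟨r, rfl⟩ := ih hl fun b hb => by
      obtain ⟨s', hs'⟩ := h b (List.mem_cons_of_mem _ hb)
      have hba : b ≠ a := fun hba => hal (hba ▸ hb)
      exact (indep_and_exists_of_traceOf_mul_eq hsym hba hs'.symm).2
    exact ⟨r, by rw [List.map_cons, List.prod_cons, mul_assoc]⟩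

section FirstLetters

variable [Fintype A]

open Classical in
noncomputable def firstLetters (t : TraceMonoid A I) : Finset A :=
  {a | ∃ s, t = traceOf A I a * s}

lemma mem_firstLetters {t : TraceMonoid A I} {a : A} :
    a ∈ firstLetters t ↔ ∃ s, t = traceOf A I a * s := by
  simp [firstLetters]

lemma firstLetters_nonempty {t : TraceMonoid A I} (ht : t ≠ 1) : (firstLetters t).Nonempty := by
  obtain ⟨_ | ⟨a, x⟩, rfl⟩ := ofList_surjective t
  · exact absurd ofList_nil ht
  · exact ⟨a, mem_firstLetters.mpr ⟨_, ofList_cons a x⟩⟩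

lemma indep_of_mem_firstLetters (hsym : Symmetric I) {t : TraceMonoid A I} {a b : A}
    (ha : a ∈ firstLetters t) (hb : b ∈ firstLetters t) (hab : a ≠ b) : I a b := by
  obtain ⟨s, rfl⟩ := mem_firstLetters.mp ha
  obtain ⟨s', hs'⟩ := mem_firstLetters.mp hb
  exact (indep_and_exists_of_traceOf_mul_eq hsym hab hs').1

lemma isClique_firstLetters (hsym : Symmetric I) {t : TraceMonoid A I} (ht : t ≠ 1) :
    IsClique A I (firstLetters t) :=
  ⟨firstLetters_nonempty ht, fun _ ha _ hb => indep_of_mem_firstLetters hsym ha hb⟩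

theorem exists_eq_wB_firstLetters_mul (hsym : Symmetric I) (t : TraceMonoid A I) :
    ∃ s, t = wB A I (firstLetters t) * s :=
  exists_eq_prod_mul hsym (Finset.nodup_toList _) fun _ ha =>
    mem_firstLetters.mp (Finset.mem_toList.mp ha)

lemma image_firstLetters_of_map_eq_self [DecidableEq A] {φ : TraceMonoid A I →* TraceMonoid A I}
    {σ : Equiv.Perm A} (hσ : ∀ a, φ (traceOf A I a) = traceOf A I (σ a)) {t : TraceMonoid A I}
    (ht : φ t = t) : (firstLetters t).image σ = firstLetters t := by
  refine Finset.eq_of_subset_of_card_le (fun b hb => ?_)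
    (Finset.card_image_of_injective _ σ.injective).ge
  obtain ⟨a, ha, rfl⟩ := Finset.mem_image.mp hb
  obtain ⟨s, hs⟩ := mem_firstLetters.mp ha
  exact mem_firstLetters.mpr ⟨φ s, by rw [← hσ, ← map_mul, ← hs, ht]⟩

end FirstLetters

lemma map_wB_eq_self [DecidableEq A] {φ : TraceMonoid A I →* TraceMonoid A I}
    {σ : Equiv.Perm A} (hσ : ∀ a, φ (traceOf A I a) = traceOf A I (σ a)) {B : Finset A}
    (hB : ∀ a ∈ B, ∀ b ∈ B, a ≠ b → I a b) (hBσ : B.image σ = B) :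
    φ (wB A I B) = wB A I B := by
  have hperm : (B.toList.map σ).Perm B.toList :=
    List.perm_of_nodup_nodup_toFinset_eq (B.nodup_toList.map σ.injective) B.nodup_toList
      (by
        rw [Finset.toList_toFinset]
        conv_rhs => rw [← hBσ]
        ext
        simp)
  have hcomm : (B.toList.map (traceOf A I)).Pairwise Commute :=
    List.pairwise_map.mpr (B.nodup_toList.imp_of_mem fun ha hb hab =>
      commute_traceOf (hB _ (Finset.mem_toList.mp ha) _ (Finset.mem_toList.mp hb) hab))
  rw [wB, map_list_prod, List.map_map, (hperm.map _).symm.prod_eq' hcomm, List.map_map]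
  congr 2
  ext a
  exact hσ a

theorem ofList_mem_closure_of_map_eq_self [Fintype A] [DecidableEq A] (hsym : Symmetric I)
    {φ : TraceMonoid A I →* TraceMonoid A I} {σ : Equiv.Perm A}
    (hσ : ∀ a, φ (traceOf A I a) = traceOf A I (σ a)) (x : List A)
    (hx : φ (ofList I x) = ofList I x) :
    ofList I x ∈ Submonoid.closure
      {w | ∃ B : Finset A, IsClique A I B ∧ B.image σ = B ∧ w = wB A I B} := by
  rcases eq_or_ne (ofList I x) 1 with h1 | h1
  · rw [h1]
    exact one_mem _
  obtain ⟨s, hs⟩ := exists_eq_wB_firstLetters_mul hsym (ofList I x)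
  have hB := isClique_firstLetters hsym h1
  have hBσ := image_firstLetters_of_map_eq_self hσ hx
  generalize firstLetters (ofList I x) = B at hs hB hBσ
  obtain ⟨y, rfl⟩ := ofList_surjective s
  have hy : φ (ofList I y) = ofList I y := by
    have := isLeftCancelMul hsym
    refine mul_left_cancel (a := wB A I B) ?_
    calc wB A I B * φ (ofList I y) = φ (wB A I B * ofList I y) := by
          rw [map_mul, map_wB_eq_self hσ hB.2 hBσ]
      _ = wB A I B * ofList I y := by rw [← hs, hx]
  have hlen : y.length < x.length := by
    have := (perm_of_ofList_eq (hs.trans (by rw [wB_eq_ofList, ofList_append]))).length_eq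
    rw [List.length_append, Finset.length_toList] at this
    have := hB.1.card_pos
    omega
  rw [hs]
  exact mul_mem (Submonoid.subset_closure ⟨B, hB, hBσ, rfl⟩)
    (ofList_mem_closure_of_map_eq_self hsym hσ y hy)
termination_by x.length

end TraceMonoid

theorem fix_eq_closure_invariant_cliques_general (A : Type) [Fintype A] [DecidableEq A]
    (I : A → A → Prop) (hsym : Symmetric I)
    (φ : Monoid.End (TraceMonoid A I)) (σ : Equiv.Perm A)
    (hσ : ∀ a : A, φ (traceOf A I a) = traceOf A I (σ a)) :
    fixedSubmonoid (φ : TraceMonoid A I →* TraceMonoid A I) =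
      Submonoid.closure
        {w | ∃ B : Finset A, IsClique A I B ∧ B.image σ = B ∧ w = wB A I B} := by
  refine le_antisymm (fun t ht => ?_) (Submonoid.closure_le.mpr ?_)
  · obtain ⟨x, rfl⟩ := TraceMonoid.ofList_surjective t
    exact TraceMonoid.ofList_mem_closure_of_map_eq_self hsym hσ x ht
  · rintro _ ⟨B, hB, hBσ, rfl⟩
    exact TraceMonoid.map_wB_eq_self hσ hB.2 hBσ

/-- If an endomorphism `φ` of `M(A,I)` restricts to a permutation `σ` of the letters,
then its fixed point submonoid is generated by the elements `w_B`, where `B` ranges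
over the cliques with `σ(B) = B`. -/
theorem fix_eq_closure_invariant_cliques (A : Type) [Fintype A] [DecidableEq A]
    (I : A → A → Prop) (hsym : Symmetric I) (hirr : Irreflexive I)
    (φ : Monoid.End (TraceMonoid A I)) (σ : Equiv.Perm A)
    (hσ : ∀ a : A, φ (traceOf A I a) = traceOf A I (σ a)) :
    fixedSubmonoid (φ : TraceMonoid A I →* TraceMonoid A I) =
      Submonoid.closure
        {w | ∃ B : Finset A, IsClique A I B ∧ B.image σ = B ∧ w = wB A I B} :=
  fix_eq_closure_invariant_cliques_general A I hsym φ σ hσ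
end

section
/- Let (A,I) be a finite independence alphabet and let φ be an endomorphism of the trace monoid M(A,I) such that φ(a) ≠ 1 for every letter a ∈ A. Let A₀ = A ∩ Per φ. Then φ(A₀) = A₀. -/
/-- The set of letters which are periodic points of the endomorphism `φ`. -/
def perLetters (A : Type) (I : A → A → Prop) (φ : Monoid.End (TraceMonoid A I)) : Set A :=
  {a : A | ∃ n : ℕ, 1 ≤ n ∧ (φ ^ n) (traceOf A I a) = traceOf A I a}

/-!
A non-erasing endomorphism never shortens a trace, so trace length is constant along periodic
orbits. As `φ` permutes its periodic points, it permutes those of length one, which are exactly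
the periodic letters.
-/

namespace FreeMonoid

def lengthCon (α : Type*) : Con (FreeMonoid α) where
  toSetoid := Setoid.ker length
  mul' h₁ h₂ := by simp_all [Setoid.ker_def]

end FreeMonoid

section TraceLength

variable {A : Type} {I : A → A → Prop}

lemma traceCon_le_lengthCon : traceCon A I ≤ FreeMonoid.lengthCon A :=
  Con.conGen_le.2 fun _ _ ⟨_, _, _, hx, hy⟩ ↦ by
    simp [FreeMonoid.lengthCon, Setoid.ker_def, hx, hy]

def traceLength (x : TraceMonoid A I) : ℕ :=
  (traceCon A I).liftOn x FreeMonoid.length fun _ _ h ↦ traceCon_le_lengthCon h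

@[simp]
lemma traceLength_coe (w : FreeMonoid A) :
    traceLength (w : TraceMonoid A I) = w.length := rfl

@[simp]
lemma traceLength_one : traceLength (1 : TraceMonoid A I) = 0 := rfl

@[simp]
lemma traceLength_mul (x y : TraceMonoid A I) :
    traceLength (x * y) = traceLength x + traceLength y :=
  Con.induction_on₂ x y fun v w ↦ FreeMonoid.length_mul v w

lemma traceLength_eq_zero {x : TraceMonoid A I} : traceLength x = 0 ↔ x = 1 := by
  refine ⟨Con.induction_on x fun w hw ↦ ?_, fun hx ↦ hx ▸ traceLength_one⟩
  rw [traceLength_coe, FreeMonoid.length_eq_zero] at hw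
  rw [hw, Con.coe_one]

lemma traceLength_eq_one {x : TraceMonoid A I} : traceLength x = 1 ↔ ∃ a, traceOf A I a = x := by
  refine ⟨Con.induction_on x fun w hw ↦ ?_, fun ⟨a, ha⟩ ↦ ha ▸ rfl⟩
  obtain ⟨a, rfl⟩ := FreeMonoid.length_eq_one.1 hw
  exact ⟨a, rfl⟩

lemma traceLength_le_apply (φ : Monoid.End (TraceMonoid A I))
    (hne : ∀ a : A, φ (traceOf A I a) ≠ 1) (x : TraceMonoid A I) :
    traceLength x ≤ traceLength (φ x) := by
  induction x using Con.induction_on with | H w => ?_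
  induction w using FreeMonoid.inductionOn' with
  | one => simp
  | of_mul a w ih =>
    have hletter : 0 < traceLength (φ (traceOf A I a)) :=
      Nat.pos_of_ne_zero (traceLength_eq_zero.not.2 (hne a))
    rw [Con.coe_mul, map_mul, traceLength_mul, traceLength_mul]
    exact Nat.add_le_add hletter ih

end TraceLength

namespace Function

variable {α β : Type*} [PartialOrder β] {f : α → α} {ℓ : α → β}

lemma map_apply_eq_of_mem_periodicPts (hℓ : ∀ x, ℓ x ≤ ℓ (f x)) {x : α}
    (hx : x ∈ periodicPts f) : ℓ (f x) = ℓ x := by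
  obtain ⟨n, hn, hperiod⟩ := mem_periodicPts.1 hx
  have hmono : Monotone fun k ↦ ℓ (f^[k] x) :=
    monotone_nat_of_le_succ fun k ↦ by simpa only [iterate_succ_apply'] using hℓ _
  refine le_antisymm ?_ (hℓ x)
  calc ℓ (f x) = ℓ (f^[1] x) := rfl
    _ ≤ ℓ (f^[n] x) := hmono hn
    _ = ℓ x := congrArg ℓ hperiod

lemma image_periodicPts_inter_preimage (hℓ : ∀ x, ℓ x ≤ ℓ (f x)) (s : Set β) :
    f '' (periodicPts f ∩ ℓ ⁻¹' s) = periodicPts f ∩ ℓ ⁻¹' s := by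
  apply Set.Subset.antisymm
  · rintro _ ⟨x, ⟨hx, hxs⟩, rfl⟩
    refine ⟨(bijOn_periodicPts f).mapsTo hx, ?_⟩
    rwa [Set.mem_preimage, map_apply_eq_of_mem_periodicPts hℓ hx]
  · rintro y ⟨hy, hys⟩
    obtain ⟨x, hx, rfl⟩ := (bijOn_periodicPts f).surjOn hy
    refine ⟨x, ⟨hx, ?_⟩, rfl⟩
    rwa [Set.mem_preimage, ← map_apply_eq_of_mem_periodicPts hℓ hx]

end Function

lemma mem_perLetters_iff {A : Type} {I : A → A → Prop} {φ : Monoid.End (TraceMonoid A I)}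
    {a : A} : a ∈ perLetters A I φ ↔ traceOf A I a ∈ Function.periodicPts φ :=
  Iff.rfl

lemma image_traceOf_perLetters {A : Type} {I : A → A → Prop} (φ : Monoid.End (TraceMonoid A I)) :
    traceOf A I '' perLetters A I φ = Function.periodicPts φ ∩ traceLength ⁻¹' {1} := by
  ext x
  simp only [Set.mem_image, Set.mem_inter_iff, Set.mem_preimage, Set.mem_singleton_iff,
    traceLength_eq_one, mem_perLetters_iff]
  constructor
  · rintro ⟨a, ha, rfl⟩
    exact ⟨ha, a, rfl⟩
  · rintro ⟨hx, a, rfl⟩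
    exact ⟨a, hx, rfl⟩

theorem perLetters_image_eq_general (A : Type) (I : A → A → Prop)
    (φ : Monoid.End (TraceMonoid A I))
    (hne : ∀ a : A, φ (traceOf A I a) ≠ 1) :
    ⇑φ '' (traceOf A I '' perLetters A I φ) = traceOf A I '' perLetters A I φ := by
  rw [image_traceOf_perLetters]
  exact Function.image_periodicPts_inter_preimage (traceLength_le_apply φ hne) {1}

/-- If `φ(a) ≠ 1` for every letter `a`, and `A₀ = A ∩ Per φ`, then `φ(A₀) = A₀`. -/
theorem perLetters_image_eq (A : Type) [Fintype A] (I : A → A → Prop)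
    (hsym : Symmetric I) (hirr : Irreflexive I)
    (φ : Monoid.End (TraceMonoid A I))
    (hne : ∀ a : A, φ (traceOf A I a) ≠ 1) :
    ⇑φ '' (traceOf A I '' perLetters A I φ) = traceOf A I '' perLetters A I φ :=
  perLetters_image_eq_general A I φ hne
end

section
/- Let (A,I) be a finite independence alphabet and let φ be an endomorphism of the trace monoid M(A,I) such that φ(a) ≠ 1 for every letter a ∈ A. Let A₀ = A ∩ Per φ and let M′ be the submonoid of M(A,I) generated by A₀ (so φ restricts to an endomorphism φ′ of M′). Then Fix φ = Fix φ′; in particular, every fixed point of φ lies in the submonoid generated by A₀. -/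
/-!
The Parikh image (multiset of letters) turns a fixed point `x = a₁ ⋯ aₙ` of `φ` into
the identity `parikh x = parikh (φ a₁) + ⋯ + parikh (φ aₙ)`. No `φ aᵢ` is empty, so
comparing lengths shows that every `φ aᵢ` is a single letter, and comparing multisets
shows that `φ` permutes the finitely many letters of `x`. Hence every letter of `x` is
periodic.
-/

open Function Set

theorem Set.Finite.subset_periodicPts_of_bijOn {α : Type*} {f : α → α} {s : Set α}
    (hs : s.Finite) (hf : BijOn f s s) : s ⊆ periodicPts f := by
  have := hs.to_subtype
  intro x hx
  have hsc : Semiconj Subtype.val hf.mapsTo.restrict f := fun _ => rfl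
  exact hsc.mapsTo_periodicPts
    ((hf.mapsTo.restrict_inj.mpr hf.injOn).mem_periodicPts ⟨x, hx⟩)

theorem Multiset.forall_card_eq_one_of_card_bind_le {α β : Type*} {m : Multiset α}
    {g : α → Multiset β} (hg : ∀ a ∈ m, g a ≠ 0) (h : card (m.bind g) ≤ card m) :
    ∀ a ∈ m, card (g a) = 1 := by
  by_contra! ⟨a, ha, hga⟩
  have hlt : (m.map fun _ => 1).sum < (m.map (card ∘ g)).sum :=
    Multiset.sum_lt_sum (fun b hb => card_pos.mpr (hg b hb))
      ⟨a, ha, lt_of_le_of_ne (card_pos.mpr (hg a ha)) hga.symm⟩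
  rw [← card_bind, map_const', sum_replicate, smul_eq_mul, mul_one] at hlt
  exact h.not_gt hlt

namespace TraceMonoid

variable {A B : Type} {I : A → A → Prop} {J : B → B → Prop}

def parikh (x : TraceMonoid A I) : Multiset A :=
  Multiplicative.toAdd <|
    (traceCon A I).lift (FreeMonoid.lift fun a => Multiplicative.ofAdd {a})
      (Con.conGen_le.mpr <| by
        rintro _ _ ⟨a, b, -, rfl, rfl⟩
        simp only [Con.ker_rel, map_mul]
        exact mul_comm _ _) x

@[simp]
theorem parikh_one : parikh (1 : TraceMonoid A I) = 0 := rfl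

@[simp]
theorem parikh_mul (x y : TraceMonoid A I) : parikh (x * y) = parikh x + parikh y := by
  simp [parikh]

@[simp]
theorem parikh_traceOf (a : A) : parikh (traceOf A I a) = {a} := rfl

@[simp]
theorem parikh_list_prod (l : List A) : parikh (l.map (traceOf A I)).prod = l := by
  induction l with
  | nil => rfl
  | cons a l ih => simp [ih, Multiset.singleton_add]

theorem exists_list_prod_eq (x : TraceMonoid A I) :
    ∃ l : List A, (l.map (traceOf A I)).prod = x := by
  obtain ⟨w, rfl⟩ := (traceCon A I).mk'_surjective x
  have : (traceCon A I).mk' = FreeMonoid.lift (traceOf A I) := FreeMonoid.hom_eq fun _ => rfl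
  exact ⟨w.toList, by rw [this, FreeMonoid.lift_apply]⟩

theorem eq_one_of_parikh_eq_zero {x : TraceMonoid A I} (hx : parikh x = 0) : x = 1 := by
  obtain ⟨l, rfl⟩ := exists_list_prod_eq x
  rw [parikh_list_prod, Multiset.coe_eq_zero] at hx
  simp [hx]

theorem eq_traceOf_of_parikh_eq_singleton {x : TraceMonoid A I} {b : A} (hx : parikh x = {b}) :
    x = traceOf A I b := by
  obtain ⟨l, rfl⟩ := exists_list_prod_eq x
  rw [parikh_list_prod, Multiset.coe_eq_singleton] at hx
  simp [hx]

theorem parikh_map {F : Type*} [FunLike F (TraceMonoid A I) (TraceMonoid B J)]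
    [MonoidHomClass F (TraceMonoid A I) (TraceMonoid B J)] (φ : F) (x : TraceMonoid A I) :
    parikh (φ x) = (parikh x).bind fun a => parikh (φ (traceOf A I a)) := by
  obtain ⟨l, rfl⟩ := exists_list_prod_eq x
  induction l with
  | nil => simp
  | cons a l ih => simp [ih, -Multiset.cons_coe]

theorem mem_closure_traceOf_parikh (x : TraceMonoid A I) :
    x ∈ Submonoid.closure (traceOf A I '' {a | a ∈ parikh x}) := by
  obtain ⟨l, rfl⟩ := exists_list_prod_eq x
  refine Submonoid.list_prod_mem _ fun y hy => ?_
  obtain ⟨a, ha, rfl⟩ := List.mem_map.mp hy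
  exact Submonoid.subset_closure ⟨a, by simpa using ha, rfl⟩

theorem mem_perLetters_iff {φ : Monoid.End (TraceMonoid A I)} {a : A} :
    a ∈ perLetters A I φ ↔ traceOf A I a ∈ periodicPts φ :=
  Iff.rfl

section Fixed

variable (φ : Monoid.End (TraceMonoid A I)) {x : TraceMonoid A I}

theorem parikh_eq_bind_of_fixed (hx : φ x = x) :
    parikh x = (parikh x).bind fun a => parikh (φ (traceOf A I a)) := by
  rw [← parikh_map, hx]

theorem exists_traceOf_eq_of_fixed (hx : φ x = x)
    (hne : ∀ a ∈ parikh x, φ (traceOf A I a) ≠ 1) :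
    ∀ a ∈ parikh x, ∃ b, φ (traceOf A I a) = traceOf A I b := by
  have hbind := parikh_eq_bind_of_fixed φ hx
  have hcard := Multiset.forall_card_eq_one_of_card_bind_le
    (fun a ha h => hne a ha (eq_one_of_parikh_eq_zero h)) (congrArg Multiset.card hbind).ge
  intro a ha
  obtain ⟨b, hb⟩ := Multiset.card_eq_one.mp (hcard a ha)
  exact ⟨b, eq_traceOf_of_parikh_eq_singleton hb⟩

theorem bijOn_traceOf_parikh_of_fixed (hx : φ x = x)
    (hne : ∀ a ∈ parikh x, φ (traceOf A I a) ≠ 1) :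
    BijOn φ (traceOf A I '' {a | a ∈ parikh x}) (traceOf A I '' {a | a ∈ parikh x}) := by
  have hbind := parikh_eq_bind_of_fixed φ hx
  have hfin := (parikh x).finite_toSet.image (traceOf A I)
  refine (hfin.surjOn_iff_bijOn_of_mapsTo ?_).mp ?_
  · rintro _ ⟨a, ha, rfl⟩
    obtain ⟨b, hb⟩ := exists_traceOf_eq_of_fixed φ hx hne a ha
    refine ⟨b, ?_, hb.symm⟩
    rw [hbind]
    exact Multiset.mem_bind.mpr ⟨a, ha, by simp [hb]⟩
  · rintro _ ⟨c, hc, rfl⟩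
    rw [hbind] at hc
    obtain ⟨a, ha, hca⟩ := Multiset.mem_bind.mp hc
    obtain ⟨b, hb⟩ := exists_traceOf_eq_of_fixed φ hx hne a ha
    rw [hb, parikh_traceOf, Multiset.mem_singleton] at hca
    exact ⟨traceOf A I a, ⟨a, ha, rfl⟩, by rw [hb, hca]⟩

theorem parikh_subset_perLetters_of_fixed (hx : φ x = x)
    (hne : ∀ a ∈ parikh x, φ (traceOf A I a) ≠ 1) :
    {a | a ∈ parikh x} ⊆ perLetters A I φ := fun _ ha =>
  mem_perLetters_iff.mpr <|
    ((parikh x).finite_toSet.image (traceOf A I)).subset_periodicPts_of_bijOn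
      (bijOn_traceOf_parikh_of_fixed φ hx hne) (mem_image_of_mem _ ha)

end Fixed

end TraceMonoid

theorem fix_eq_fix_restriction_general (A : Type) (I : A → A → Prop)
    (φ : Monoid.End (TraceMonoid A I))
    (hne : ∀ a : A, φ (traceOf A I a) ≠ 1) :
    {x : TraceMonoid A I | φ x = x} =
      {x : TraceMonoid A I |
        x ∈ Submonoid.closure (traceOf A I '' perLetters A I φ) ∧ φ x = x} := by
  ext x
  refine ⟨fun hx => ⟨?_, hx⟩, And.right⟩
  exact Submonoid.closure_mono
    (image_mono (TraceMonoid.parikh_subset_perLetters_of_fixed φ hx fun a _ => hne a))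
    (TraceMonoid.mem_closure_traceOf_parikh x)

/-- If `φ(a) ≠ 1` for every letter `a`, and `A₀ = A ∩ Per φ`, then the fixed points of
`φ` are exactly the fixed points lying in the submonoid `M′` generated by `A₀`
(i.e. `Fix φ = Fix φ′` for the restriction `φ′` of `φ` to `M′`); in particular every
fixed point of `φ` lies in `M′`. -/
theorem fix_eq_fix_restriction (A : Type) [Fintype A] (I : A → A → Prop)
    (hsym : Symmetric I) (hirr : Irreflexive I)
    (φ : Monoid.End (TraceMonoid A I))
    (hne : ∀ a : A, φ (traceOf A I a) ≠ 1) :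
    {x : TraceMonoid A I | φ x = x} =
      {x : TraceMonoid A I |
        x ∈ Submonoid.closure (traceOf A I '' perLetters A I φ) ∧ φ x = x} :=
  fix_eq_fix_restriction_general A I φ hne
end

section
/- Let (A,I) be a finite independence alphabet and let φ be an endomorphism of the trace monoid M(A,I). Let A₁ = {a ∈ A : φ(a) = 1}, A₂ = A \ A₁, let M″ be the submonoid of M(A,I) generated by A₂, let π be the projection endomorphism of M(A,I) determined by π(a) = a for a ∈ A₂ and π(a) = 1 for a ∈ A₁, and let φ″ : M″ → M″ be the endomorphism sending x to π(φ(x)). Then Fix φ = φ(Fix φ″), the image under φ of the fixed point set of φ″. -/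
/-! Since `π` only kills letters that `φ` kills, `φ ∘ π = φ`. Hence a fixed point `x` of `φ`
equals `φ (π x)`, where `π x` lies in `M″` and is fixed by `φ″`; conversely, if `π (φ y) = y`
then `φ (φ y) = φ (π (φ y)) = φ y`. -/

theorem setOf_fixed_eq_image_of_comp_eq {α : Type*} (f p : α → α) (S : Set α)
    (hfp : ∀ x, f (p x) = f x) (hpS : ∀ x, p x ∈ S) :
    {x | f x = x} = f '' {x | x ∈ S ∧ p (f x) = x} := by
  ext x
  constructor
  · intro hx
    exact ⟨p x, ⟨hpS x, by rw [hfp, hx]⟩, by rw [hfp, hx]⟩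
  · rintro ⟨y, ⟨-, hy⟩, rfl⟩
    change f (f y) = f y
    rw [← hfp (f y), hy]

namespace TraceMonoid

variable {A : Type} {I : A → A → Prop} {M : Type*} [Monoid M]

theorem hom_ext {f g : TraceMonoid A I →* M}
    (h : ∀ a, f (traceOf A I a) = g (traceOf A I a)) : f = g :=
  Con.hom_ext (FreeMonoid.hom_eq h)

theorem closure_range_traceOf : Submonoid.closure (Set.range (traceOf A I)) = ⊤ := by
  have : Set.range (traceOf A I) = (traceCon A I).mk' '' Set.range FreeMonoid.of :=
    (Set.range_comp _ _)
  rw [this, ← MonoidHom.map_mclosure, FreeMonoid.closure_range_of, ← MonoidHom.mrange_eq_map,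
    Con.mrange_mk']

theorem map_mem_of_forall_traceOf_mem {F : Type*} [FunLike F (TraceMonoid A I) M]
    [MonoidHomClass F (TraceMonoid A I) M] (f : F) (S : Submonoid M)
    (h : ∀ a, f (traceOf A I a) ∈ S) (x : TraceMonoid A I) : f x ∈ S := by
  have hrange : MonoidHom.mrange f ≤ S := by
    rw [MonoidHom.mrange_eq_map, ← closure_range_traceOf, MonoidHom.map_mclosure,
      Submonoid.closure_le, ← Set.range_comp]
    rintro _ ⟨a, rfl⟩
    exact h a
  exact hrange ⟨x, rfl⟩

def IsProjectionAlong (f : TraceMonoid A I →* M) (π : Monoid.End (TraceMonoid A I)) : Prop :=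
  ∀ a : A,
    (f (traceOf A I a) = 1 → π (traceOf A I a) = 1) ∧
    (f (traceOf A I a) ≠ 1 → π (traceOf A I a) = traceOf A I a)

variable {f : TraceMonoid A I →* M} {π : Monoid.End (TraceMonoid A I)}

theorem IsProjectionAlong.map_apply (hπ : IsProjectionAlong f π) (x : TraceMonoid A I) :
    f (π x) = f x := by
  have hcomp : f.comp π = f := hom_ext fun a => by
    change f (π (traceOf A I a)) = f (traceOf A I a)
    by_cases ha : f (traceOf A I a) = 1
    · rw [(hπ a).1 ha, map_one, ha]
    · rw [(hπ a).2 ha]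
  exact DFunLike.congr_fun hcomp x

theorem IsProjectionAlong.apply_mem_closure (hπ : IsProjectionAlong f π) (x : TraceMonoid A I) :
    π x ∈ Submonoid.closure (traceOf A I '' {a | f (traceOf A I a) ≠ 1}) := by
  refine map_mem_of_forall_traceOf_mem π _ (fun a => ?_) x
  by_cases ha : f (traceOf A I a) = 1
  · rw [(hπ a).1 ha]
    exact one_mem _
  · rw [(hπ a).2 ha]
    exact Submonoid.subset_closure ⟨a, ha, rfl⟩

end TraceMonoid

theorem fix_eq_image_fix_general (A : Type) (I : A → A → Prop)
    (φ π : Monoid.End (TraceMonoid A I))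
    (hπ : ∀ a : A,
      (φ (traceOf A I a) = 1 → π (traceOf A I a) = 1) ∧
      (φ (traceOf A I a) ≠ 1 → π (traceOf A I a) = traceOf A I a)) :
    {x : TraceMonoid A I | φ x = x} =
      ⇑φ '' {x : TraceMonoid A I |
        x ∈ Submonoid.closure (traceOf A I '' {a : A | φ (traceOf A I a) ≠ 1}) ∧
        π (φ x) = x} :=
  have hπ' : TraceMonoid.IsProjectionAlong (φ : TraceMonoid A I →* TraceMonoid A I) π := hπ
  setOf_fixed_eq_image_of_comp_eq φ π _ hπ'.map_apply hπ'.apply_mem_closure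

/-- Let `A₁ = {a ∈ A : φ(a) = 1}`, `A₂ = A \ A₁`, let `M″` be the submonoid generated by
`A₂`, let `π` be the projection endomorphism fixing the letters of `A₂` and killing those
of `A₁`, and let `φ″ : M″ → M″, x ↦ π(φ(x))`. Then `Fix φ = φ(Fix φ″)`. -/
theorem fix_eq_image_fix (A : Type) [Fintype A] (I : A → A → Prop)
    (hsym : Symmetric I) (hirr : Irreflexive I)
    (φ π : Monoid.End (TraceMonoid A I))
    (hπ : ∀ a : A,
      (φ (traceOf A I a) = 1 → π (traceOf A I a) = 1) ∧
      (φ (traceOf A I a) ≠ 1 → π (traceOf A I a) = traceOf A I a)) :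
    {x : TraceMonoid A I | φ x = x} =
      ⇑φ '' {x : TraceMonoid A I |
        x ∈ Submonoid.closure (traceOf A I '' {a : A | φ (traceOf A I a) ≠ 1}) ∧
        π (φ x) = x} :=
  fix_eq_image_fix_general A I φ π hπ
end

section
/- Let (A,I) be a finite independence alphabet and let M(A,I) be the trace monoid equipped with the Foata normal form metric d. Then for all u,v,w ∈ M(A,I), d(uv,uw) ≤ d(v,w); that is, left multiplication by any fixed element is a contraction of (M(A,I),d). -/
/-- The product `w_{B₁} ⋯ w_{B_k}` associated with a list of cliques. -/
noncomputable def wProd (A : Type) (I : A → A → Prop) (L : List (Finset A)) :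
    TraceMonoid A I :=
  (L.map (wB A I)).prod

/-- A list `[B₁, …, B_k]` is a Foata chain if each `B_i` is a clique and, for every
`i ≥ 2` and every `a ∈ B_i`, there is some `b ∈ B_{i-1}` with `(a,b) ∉ I`. -/
def IsFoataChain (A : Type) (I : A → A → Prop) (L : List (Finset A)) : Prop :=
  (∀ B ∈ L, IsClique A I B) ∧
    ∀ i : ℕ, (hi : i + 1 < L.length) →
      ∀ a ∈ L[i + 1], ∃ b ∈ L[i], ¬ I a b

/-- `[B₁, …, B_k]` is the Foata normal form of `u` if it is a Foata chain whose
product is `u`. (Such a list exists and is unique for every `u`.) -/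
def IsFNF (A : Type) (I : A → A → Prop) (L : List (Finset A)) (u : TraceMonoid A I) :
    Prop :=
  IsFoataChain A I L ∧ u = wProd A I L

/-- For `u ≠ v`, `rNat u v` is the largest `k` such that the Foata normal forms of
`u` and `v` have the same first `k` components. -/
noncomputable def rNat (A : Type) (I : A → A → Prop) (u v : TraceMonoid A I) : ℕ :=
  sSup {k : ℕ | ∃ P Lu Lv : List (Finset A), P.length = k ∧
    IsFNF A I (P ++ Lu) u ∧ IsFNF A I (P ++ Lv) v}

open Classical

/-- `r(u,v) ∈ ℕ ∪ {∞}`: the length of the longest common prefix of the Foata normal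
forms of `u` and `v`, with `r(u,u) = ∞`. -/
noncomputable def rE (A : Type) (I : A → A → Prop) (u v : TraceMonoid A I) : ℕ∞ :=
  if u = v then ⊤ else (rNat A I u v : ℕ∞)

/-- The Foata normal form metric: `d(u,v) = 2^{-r(u,v)}`, with `2^{-∞} = 0`. -/
noncomputable def dFNF (A : Type) (I : A → A → Prop) (u v : TraceMonoid A I) : ℝ :=
  if u = v then 0 else (2 : ℝ) ^ (-(rNat A I u v : ℤ))

/-- The content of a trace: the set of letters occurring in (any representative of) it. -/
def content (A : Type) (I : A → A → Prop) (u : TraceMonoid A I) : Set A :=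
  {a : A | ∃ w : FreeMonoid A, (traceCon A I).mk' w = u ∧ a ∈ FreeMonoid.toList w}


namespace Foata

variable {A : Type} {I : A → A → Prop}

theorem take_eq_take_of_le {α : Type*} {L M : List α} {m n : ℕ} (h : L.take n = M.take n)
    (hmn : m ≤ n) : L.take m = M.take m := by
  rw [← Nat.min_eq_left hmn, ← List.take_take, h, List.take_take]

variable (I) in
def Supports (X Y : Finset A) : Prop := ∀ a ∈ Y, ∃ b ∈ X, ¬ I a b

theorem isFoataChain_iff {L : List (Finset A)} :
    IsFoataChain A I L ↔ (∀ B ∈ L, IsClique A I B) ∧ L.IsChain (Supports I) := by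
  rw [IsFoataChain, List.isChain_iff_getElem]
  rfl

theorem IsFoataChain.of_append {L M : List (Finset A)} (h : IsFoataChain A I (L ++ M)) :
    IsFoataChain A I L := by
  rw [isFoataChain_iff, List.isChain_append] at *
  exact ⟨fun B hB => h.1 B (List.mem_append_left M hB), h.2.1⟩

/-- One more than the index of the last block of `C` containing a letter that does not commute
with `a`, and `0` if there is none: the index of the block that `a` joins in `push I a C`. -/
noncomputable def level (I : A → A → Prop) (a : A) : List (Finset A) → ℕ
  | [] => 0
  | B :: C => if level I a C = 0 ∧ ∀ b ∈ B, I a b then 0 else level I a C + 1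

theorem level_eq_zero_iff {a : A} {C : List (Finset A)} :
    level I a C = 0 ↔ ∀ B ∈ C, ∀ b ∈ B, I a b := by
  induction C with
  | nil => simp [level]
  | cons B C ih =>
    simp only [level, List.forall_mem_cons, ← ih]
    split_ifs with h
    · exact iff_of_true rfl ⟨h.2, h.1⟩
    · exact iff_of_false id fun h' => h ⟨h'.2, h'.1⟩

theorem level_le_length (a : A) (C : List (Finset A)) : level I a C ≤ C.length := by
  induction C with
  | nil => simp [level]
  | cons B C ih =>
    simp only [level, List.length_cons]
    split_ifs <;> omega

theorem length_take_level (a : A) (C : List (Finset A)) :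
    (C.take (level I a C)).length = level I a C := by
  simpa using level_le_length a C

theorem lt_level_of_not_indep {a b : A} {C : List (Finset A)} {j : ℕ}
    (hb : b ∈ C.getD j ∅) (hab : ¬ I a b) : j < level I a C := by
  induction C generalizing j with
  | nil => simp at hb
  | cons B C ih =>
    simp only [level]
    cases j with
    | zero =>
      rw [List.getD_cons_zero] at hb
      rw [if_neg fun h => hab (h.2 b hb)]
      omega
    | succ j =>
      rw [List.getD_cons_succ] at hb
      have := ih hb
      rw [if_neg fun h => by omega]
      omega

theorem exists_not_indep_getD_level_pred {a : A} {C : List (Finset A)}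
    (h : 0 < level I a C) : ∃ b ∈ C.getD (level I a C - 1) ∅, ¬ I a b := by
  induction C with
  | nil => simp [level] at h
  | cons B C ih =>
    simp only [level] at h ⊢
    split_ifs at h ⊢ with hB
    · omega
    · rcases Nat.eq_zero_or_pos (level I a C) with h0 | hpos
      · simp only [h0, true_and, not_forall] at hB
        obtain ⟨b, hb, hab⟩ := hB
        exact ⟨b, by simpa [h0] using hb, hab⟩
      · obtain ⟨b, hb, hab⟩ := ih hpos
        refine ⟨b, ?_, hab⟩
        rw [Nat.add_sub_cancel, ← Nat.sub_add_cancel hpos, List.getD_cons_succ]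
        exact hb

theorem indep_of_mem_drop_level {a : A} {C : List (Finset A)} :
    ∀ B ∈ C.drop (level I a C), ∀ b ∈ B, I a b := by
  induction C with
  | nil => simp
  | cons B C ih =>
    simp only [level]
    split_ifs with h
    · exact List.forall_mem_cons.2 ⟨h.2, level_eq_zero_iff.mp h.1⟩
    · exact ih

theorem level_mono {a : A} {C D : List (Finset A)} (h : ∀ j, C.getD j ∅ ⊆ D.getD j ∅) :
    level I a C ≤ level I a D := by
  rcases Nat.eq_zero_or_pos (level I a C) with h0 | hpos
  · omega
  · obtain ⟨b, hb, hab⟩ := exists_not_indep_getD_level_pred hpos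
    have := lt_level_of_not_indep (h _ hb) hab
    omega

noncomputable def headInsert (a : A) : List (Finset A) → List (Finset A)
  | [] => [{a}]
  | B :: C => insert a B :: C

theorem getD_subset_headInsert (a : A) (M : List (Finset A)) (j : ℕ) :
    M.getD j ∅ ⊆ (headInsert a M).getD j ∅ := by
  cases M with
  | nil => simp
  | cons B M => cases j <;> simp [headInsert, Finset.subset_insert]

theorem mem_getD_headInsert_zero (a : A) (M : List (Finset A)) :
    a ∈ (headInsert a M).getD 0 ∅ := by
  cases M <;> simp [headInsert]

theorem isClique_insert (hsym : Symmetric I) {a : A} {B : Finset A}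
    (hB : ∀ b ∈ B, I a b) (hcl : IsClique A I B) : IsClique A I (insert a B) := by
  refine ⟨Finset.insert_nonempty a B, ?_⟩
  simp only [Finset.mem_insert]
  rintro x (rfl | hx) y (rfl | hy) hxy
  exacts [absurd rfl hxy, hB y hy, hsym (hB x hx), hcl.2 x hx y hy hxy]

theorem isClique_singleton (a : A) : IsClique A I {a} :=
  ⟨Finset.singleton_nonempty a, by simp +contextual⟩

theorem forall_isClique_headInsert (hsym : Symmetric I) {a : A} {M : List (Finset A)}
    (hcl : ∀ B ∈ M, IsClique A I B) (hM : ∀ B ∈ M, ∀ b ∈ B, I a b) :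
    ∀ B ∈ headInsert a M, IsClique A I B := by
  cases M with
  | nil => simpa [headInsert] using isClique_singleton a
  | cons B M =>
    simp only [headInsert, List.forall_mem_cons] at hcl hM ⊢
    exact ⟨isClique_insert hsym hM.1 hcl.1, hcl.2⟩

theorem isChain_headInsert (a : A) {M : List (Finset A)} (h : M.IsChain (Supports I)) :
    (headInsert a M).IsChain (Supports I) := by
  cases M with
  | nil => exact List.isChain_singleton _
  | cons B M =>
    refine h.imp_head fun hBY y hy => ?_
    obtain ⟨b, hb, hyb⟩ := hBY y hy
    exact ⟨b, Finset.mem_insert_of_mem hb, hyb⟩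

theorem supports_head_headInsert {a : A} {X : Finset A} {M : List (Finset A)}
    (hM : ∀ Y ∈ M.head?, Supports I X Y) (ha : ∃ b ∈ X, ¬ I a b) :
    ∀ Y ∈ (headInsert a M).head?, Supports I X Y := by
  cases M with
  | nil => simpa [headInsert, Supports] using ha
  | cons B M =>
    simp only [headInsert, List.head?_cons, Option.mem_def, Option.some.injEq,
      forall_eq', Supports, Finset.forall_mem_insert] at hM ⊢
    exact ⟨ha, hM⟩

variable (I) in
noncomputable def push (a : A) (C : List (Finset A)) : List (Finset A) :=
  C.take (level I a C) ++ headInsert a (C.drop (level I a C))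

theorem take_push (a : A) (C : List (Finset A)) :
    (push I a C).take (level I a C) = C.take (level I a C) := by
  rw [push, List.take_left' (length_take_level a C)]

theorem getD_append_subset_getD_append (T : List (Finset A)) {X Y : List (Finset A)}
    (h : ∀ i, X.getD i ∅ ⊆ Y.getD i ∅) (j : ℕ) :
    (T ++ X).getD j ∅ ⊆ (T ++ Y).getD j ∅ := by
  rcases lt_or_ge j T.length with hj | hj
  · rw [List.getD_append _ _ _ _ hj, List.getD_append _ _ _ _ hj]
  · rw [List.getD_append_right _ _ _ _ hj, List.getD_append_right _ _ _ _ hj]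
    exact h _

theorem getD_subset_push (a : A) (C : List (Finset A)) (j : ℕ) :
    C.getD j ∅ ⊆ (push I a C).getD j ∅ := by
  conv_lhs => rw [← List.take_append_drop (level I a C) C]
  exact getD_append_subset_getD_append _ (getD_subset_headInsert a _) j

theorem mem_getD_push_level (a : A) (C : List (Finset A)) :
    a ∈ (push I a C).getD (level I a C) ∅ := by
  rw [push, List.getD_append_right _ _ _ _ (length_take_level a C).le, length_take_level,
    Nat.sub_self]
  exact mem_getD_headInsert_zero a _

theorem exists_not_indep_of_mem_getLast?_take_level {a : A} {C : List (Finset A)} :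
    ∀ X ∈ (C.take (level I a C)).getLast?, ∃ b ∈ X, ¬ I a b := by
  intro X hX
  have hpos : 0 < level I a C := Nat.pos_of_ne_zero fun h => by simp [h] at hX
  rw [List.getLast?_take, if_neg hpos.ne', List.getElem?_eq_getElem
    (by have := level_le_length (I := I) a C; omega), Option.some_or, Option.mem_def,
    Option.some.injEq, ← List.getD_eq_getElem _ ∅] at hX
  exact hX ▸ exists_not_indep_getD_level_pred hpos

theorem isFoataChain_push (hsym : Symmetric I) (a : A) {C : List (Finset A)}
    (hC : IsFoataChain A I C) : IsFoataChain A I (push I a C) := by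
  rw [isFoataChain_iff] at hC ⊢
  obtain ⟨hcl, hch⟩ := hC
  rw [← List.take_append_drop (level I a C) C] at hcl hch
  rw [List.isChain_append] at hch
  refine ⟨fun B hB => ?_, List.isChain_append.2
    ⟨hch.1, isChain_headInsert a hch.2.1, fun X hX => ?_⟩⟩
  · rcases List.mem_append.1 hB with hB | hB
    · exact hcl B (List.mem_append_left _ hB)
    · exact forall_isClique_headInsert hsym (fun B hB => hcl B (List.mem_append_right _ hB))
        indep_of_mem_drop_level B hB
  · exact supports_head_headInsert (hch.2.2 X hX)
      (exists_not_indep_of_mem_getLast?_take_level X hX)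

theorem traceOf_commute {a b : A} (h : I a b) : Commute (traceOf A I a) (traceOf A I b) :=
  (Con.eq _).2 <| ConGen.Rel.of _ _ ⟨a, b, h, rfl, rfl⟩

theorem commute_traceOf_prod {a : A} {l : List A} (h : ∀ b ∈ l, I a b) :
    Commute (traceOf A I a) (l.map (traceOf A I)).prod :=
  Commute.list_prod_right _ _ <| by simpa using fun b hb => traceOf_commute (h b hb)

theorem wB_insert (hirr : Irreflexive I) {a : A} {B : Finset A} (hcl : IsClique A I B)
    (hB : ∀ b ∈ B, I a b) : wB A I (insert a B) = wB A I B * traceOf A I a := by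
  have ha : a ∉ B := fun h => hirr a (hB a h)
  have hpair : ((a :: B.toList).map (traceOf A I)).Pairwise Commute := by
    rw [List.pairwise_map, List.pairwise_cons]
    refine ⟨fun b hb => traceOf_commute (hB b (Finset.mem_toList.1 hb)), ?_⟩
    exact (Finset.nodup_toList B).pairwise_of_forall_ne fun x hx y hy hxy =>
      traceOf_commute (hcl.2 x (Finset.mem_toList.1 hx) y (Finset.mem_toList.1 hy) hxy)
  have hperm := (Finset.toList_insert ha).map (traceOf A I)
  rw [wB, ← hperm.symm.prod_eq' hpair, List.map_cons, List.prod_cons, wB]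
  exact commute_traceOf_prod fun b hb => hB b (Finset.mem_toList.1 hb)

theorem wProd_nil : wProd A I [] = 1 :=
  rfl

theorem wProd_cons (B : Finset A) (L : List (Finset A)) :
    wProd A I (B :: L) = wB A I B * wProd A I L :=
  List.prod_cons

theorem wProd_eq_prod_flatMap (L : List (Finset A)) :
    wProd A I L = ((L.flatMap Finset.toList).map (traceOf A I)).prod := by
  induction L with
  | nil => rfl
  | cons B L ih => rw [wProd_cons, ih, List.flatMap_cons, List.map_append, List.prod_append, wB]

theorem wProd_append (L M : List (Finset A)) :
    wProd A I (L ++ M) = wProd A I L * wProd A I M := by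
  simp [wProd]

theorem wProd_headInsert (hirr : Irreflexive I) {a : A} {M : List (Finset A)}
    (hcl : ∀ B ∈ M, IsClique A I B) (hM : ∀ B ∈ M, ∀ b ∈ B, I a b) :
    wProd A I (headInsert a M) = wProd A I M * traceOf A I a := by
  cases M with
  | nil => simp [headInsert, wProd, wB]
  | cons B M =>
    simp only [List.forall_mem_cons] at hcl hM
    have hcomm : Commute (traceOf A I a) (wProd A I M) := by
      rw [wProd_eq_prod_flatMap]
      exact commute_traceOf_prod <| by
        simpa [List.mem_flatMap] using fun b B hB hb => hM.2 B hB b hb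
    rw [headInsert, wProd_cons, wProd_cons, wB_insert hirr hcl.1 hM.1, mul_assoc, hcomm.eq,
      mul_assoc]

theorem wProd_push (hirr : Irreflexive I) (a : A) {C : List (Finset A)}
    (hcl : ∀ B ∈ C, IsClique A I B) : wProd A I (push I a C) = wProd A I C * traceOf A I a := by
  rw [push, wProd_append,
    wProd_headInsert hirr (fun B hB => hcl B (List.mem_of_mem_drop hB)) indep_of_mem_drop_level,
    ← mul_assoc, ← wProd_append, List.take_append_drop]

variable (I) in
noncomputable def pushList (C : List (Finset A)) (l : List A) : List (Finset A) :=
  l.foldl (fun D a => push I a D) C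

theorem pushList_append (C : List (Finset A)) (l₁ l₂ : List A) :
    pushList I C (l₁ ++ l₂) = pushList I (pushList I C l₁) l₂ :=
  List.foldl_append

theorem getD_subset_pushList (C : List (Finset A)) (l : List A) (j : ℕ) :
    C.getD j ∅ ⊆ (pushList I C l).getD j ∅ := by
  induction l generalizing C with
  | nil => exact subset_rfl
  | cons a l ih => exact (getD_subset_push a C j).trans (ih _)

theorem level_le_level_pushList (b : A) (C : List (Finset A)) (l : List A) :
    level I b C ≤ level I b (pushList I C l) :=
  level_mono (getD_subset_pushList C l)

theorem isFoataChain_pushList (hsym : Symmetric I) {C : List (Finset A)}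
    (hC : IsFoataChain A I C) (l : List A) : IsFoataChain A I (pushList I C l) := by
  induction l generalizing C with
  | nil => exact hC
  | cons a l ih => exact ih (isFoataChain_push hsym a hC)

theorem wProd_pushList (hsym : Symmetric I) (hirr : Irreflexive I) {C : List (Finset A)}
    (hC : IsFoataChain A I C) (l : List A) :
    wProd A I (pushList I C l) = wProd A I C * (l.map (traceOf A I)).prod := by
  induction l generalizing C with
  | nil => simp [pushList]
  | cons a l ih =>
    rw [List.map_cons, List.prod_cons, ← mul_assoc,
      ← wProd_push hirr a (isFoataChain_iff.1 hC).1]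
    exact ih (isFoataChain_push hsym a hC)

theorem take_pushList {C : List (Finset A)} {l : List A} {m : ℕ}
    (h : ∀ a ∈ l, m ≤ level I a C) : (pushList I C l).take m = C.take m := by
  induction l generalizing C with
  | nil => rfl
  | cons a l ih =>
    rw [List.forall_mem_cons] at h
    refine (ih fun b hb => (h.2 b hb).trans (level_mono (getD_subset_push a C))).trans ?_
    exact take_eq_take_of_le (take_push a C) h.1

theorem lt_level_pushList {C : List (Finset A)} {l : List A} {m : ℕ}
    (h : ∀ a ∈ l, m ≤ level I a C) {a b : A} (ha : a ∈ l) (hba : ¬ I b a) :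
    m < level I b (pushList I C l) := by
  obtain ⟨l₁, l₂, rfl⟩ := List.append_of_mem ha
  set D := pushList I C l₁
  have hD : m ≤ level I a D := (h a (by simp)).trans (level_le_level_pushList a C l₁)
  have hpush : level I a D < level I b (push I a D) :=
    lt_level_of_not_indep (mem_getD_push_level a D) hba
  have := level_le_level_pushList (I := I) b (push I a D) l₂
  rw [pushList_append]
  change m < level I b (pushList I (push I a D) l₂)
  omega

variable (I) in
noncomputable def pushBlocks (C Q : List (Finset A)) : List (Finset A) :=
  pushList I C (Q.flatMap Finset.toList)

theorem pushBlocks_cons (C : List (Finset A)) (B : Finset A) (Q : List (Finset A)) :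
    pushBlocks I C (B :: Q) = pushBlocks I (pushList I C B.toList) Q := by
  rw [pushBlocks, List.flatMap_cons, pushList_append, pushBlocks]

theorem lt_level_pushList_of_supports {C : List (Finset A)} {X Y : Finset A} {m : ℕ}
    (hXY : Supports I X Y) (hX : ∀ a ∈ X, m ≤ level I a C) {b : A} (hb : b ∈ Y) :
    m < level I b (pushList I C X.toList) :=
  let ⟨_, ha, hba⟩ := hXY b hb
  lt_level_pushList (by simpa using hX) (Finset.mem_toList.2 ha) hba

theorem take_pushBlocks {Q : List (Finset A)} (hQ : Q.IsChain (Supports I)) {C : List (Finset A)}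
    {m : ℕ} (hhead : ∀ X ∈ Q.head?, ∀ a ∈ X, m ≤ level I a C) :
    (pushBlocks I C Q).take m = C.take m := by
  induction Q generalizing C m with
  | nil => rfl
  | cons B Q ih =>
    rw [List.isChain_cons] at hQ
    simp only [List.head?_cons, Option.mem_def, Option.some.injEq, forall_eq'] at hhead
    rw [pushBlocks_cons]
    refine (take_eq_take_of_le (ih hQ.2 fun Y hY a ha => ?_) m.le_succ).trans ?_
    · exact lt_level_pushList_of_supports (hQ.1 Y hY) hhead ha
    · exact take_pushList (by simpa using hhead)

theorem le_level_pushBlocks {Q : List (Finset A)} (hQ : Q.IsChain (Supports I))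
    {C : List (Finset A)} {m : ℕ} (hhead : ∀ X ∈ Q.head?, ∀ a ∈ X, m ≤ level I a C) :
    ∀ X ∈ Q.getLast?, ∀ a ∈ X, ∀ b, ¬ I b a →
      m + Q.length ≤ level I b (pushBlocks I C Q) := by
  induction Q generalizing C m with
  | nil => simp
  | cons B Q ih =>
    rw [List.isChain_cons] at hQ
    simp only [List.head?_cons, Option.mem_def, Option.some.injEq, forall_eq'] at hhead
    rw [pushBlocks_cons]
    cases Q with
    | nil =>
      simp only [List.getLast?_singleton, Option.mem_def, Option.some.injEq, forall_eq']
      change ∀ a ∈ B, ∀ b, ¬ I b a → m + 1 ≤ level I b (pushList I C B.toList)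
      exact fun a ha b hba => lt_level_pushList (by simpa using hhead) (Finset.mem_toList.2 ha) hba
    | cons B' Q =>
      intro X hX a ha b hba
      have := ih hQ.2 (m := m + 1)
        (fun Y hY a ha => lt_level_pushList_of_supports (hQ.1 Y hY) hhead ha) X
        (by simpa [List.getLast?_cons_cons] using hX) a ha b hba
      simp only [List.length_cons] at this ⊢
      omega

theorem isFoataChain_pushBlocks (hsym : Symmetric I) {C : List (Finset A)}
    (hC : IsFoataChain A I C) (Q : List (Finset A)) : IsFoataChain A I (pushBlocks I C Q) :=
  isFoataChain_pushList hsym hC _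

theorem wProd_pushBlocks (hsym : Symmetric I) (hirr : Irreflexive I) {C : List (Finset A)}
    (hC : IsFoataChain A I C) (Q : List (Finset A)) :
    wProd A I (pushBlocks I C Q) = wProd A I C * wProd A I Q := by
  rw [pushBlocks, wProd_pushList hsym hirr hC, wProd_eq_prod_flatMap Q]


theorem le_level_pushBlocks_of_supports {P : List (Finset A)} (hP : P.IsChain (Supports I))
    (C : List (Finset A)) {Y : Finset A} (hY : ∀ X ∈ P.getLast?, Supports I X Y) :
    ∀ a ∈ Y, P.length ≤ level I a (pushBlocks I C P) := by
  intro a ha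
  cases hX : P.getLast? with
  | none => simp [List.getLast?_eq_none_iff.1 hX]
  | some X =>
    obtain ⟨b, hb, hab⟩ := hY X hX a ha
    simpa using le_level_pushBlocks hP (m := 0) (by simp) X hX b hb a hab

theorem length_le_length_pushBlocks (hirr : Irreflexive I) {P : List (Finset A)}
    (hP : IsFoataChain A I P) (C : List (Finset A)) : P.length ≤ (pushBlocks I C P).length := by
  obtain ⟨hcl, hch⟩ := isFoataChain_iff.1 hP
  cases hX : P.getLast? with
  | none => simp [List.getLast?_eq_none_iff.1 hX]
  | some X =>
    obtain ⟨a, ha⟩ := (hcl X (List.mem_of_getLast? hX)).1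
    have := le_level_pushBlocks hch (C := C) (m := 0) (by simp) X hX a ha a (hirr a)
    rw [zero_add] at this
    exact this.trans (level_le_length a _)

theorem exists_map_traceOf_prod_eq (u : TraceMonoid A I) :
    ∃ l : List A, (l.map (traceOf A I)).prod = u := by
  obtain ⟨x, rfl⟩ := (traceCon A I).mk'_surjective u
  have : (traceCon A I).mk' = FreeMonoid.lift (traceOf A I) := FreeMonoid.hom_eq fun _ => rfl
  exact ⟨x.toList, by rw [this, FreeMonoid.lift_apply]⟩

theorem exists_prefix_isFNF_mul (hsym : Symmetric I) (hirr : Irreflexive I)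
    (u : TraceMonoid A I) {P : List (Finset A)} (hP : IsFoataChain A I P) :
    ∃ Q : List (Finset A), Q.length = P.length ∧ ∀ L, IsFoataChain A I (P ++ L) →
      ∃ L', IsFNF A I (Q ++ L') (u * wProd A I (P ++ L)) := by
  obtain ⟨l, rfl⟩ := exists_map_traceOf_prod_eq u
  have hnil : IsFoataChain A I [] := isFoataChain_iff.2 ⟨by simp, List.isChain_nil⟩
  have hC := isFoataChain_pushList hsym hnil l
  set D := pushBlocks I (pushList I [] l) P
  have hD := isFoataChain_pushBlocks hsym hC P
  refine ⟨D.take P.length, List.length_take_of_le (length_le_length_pushBlocks hirr hP _),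
    fun L hPL => ?_⟩
  obtain ⟨-, hch⟩ := isFoataChain_iff.1 hPL
  rw [List.isChain_append] at hch
  have htake : (pushBlocks I D L).take P.length = D.take P.length :=
    take_pushBlocks hch.2.1 fun Y hY => le_level_pushBlocks_of_supports hch.1 _
      fun X hX => hch.2.2 X hX Y hY
  refine ⟨(pushBlocks I D L).drop P.length, ?_, ?_⟩
  · rw [← htake, List.take_append_drop]
    exact isFoataChain_pushBlocks hsym hD L
  · rw [← htake, List.take_append_drop, wProd_pushBlocks hsym hirr hD,
      wProd_pushBlocks hsym hirr hC, wProd_pushList hsym hirr hnil, wProd_nil, one_mul,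
      wProd_append, mul_assoc]

variable (A I) in
noncomputable def traceLength : TraceMonoid A I →* Multiplicative ℕ :=
  (traceCon A I).lift (FreeMonoid.lift fun _ => Multiplicative.ofAdd 1) <|
    Con.conGen_le.2 <| by
      rintro _ _ ⟨a, b, -, rfl, rfl⟩
      simp [Con.ker_rel]

theorem traceLength_traceOf (a : A) : traceLength A I (traceOf A I a) = Multiplicative.ofAdd 1 :=
  rfl

theorem length_le_traceLength_wProd {L : List (Finset A)} (hL : ∀ B ∈ L, IsClique A I B) :
    L.length ≤ (traceLength A I (wProd A I L)).toAdd := by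
  have hword (l : List A) : (traceLength A I (l.map (traceOf A I)).prod).toAdd = l.length := by
    induction l with
    | nil => simp
    | cons a l ih => simp [traceLength_traceOf, ih, add_comm]
  rw [wProd_eq_prod_flatMap, hword]
  induction L with
  | nil => simp
  | cons B L ih =>
    rw [List.forall_mem_cons] at hL
    have := Finset.card_pos.2 hL.1.1
    have := ih hL.2
    simp only [List.flatMap_cons, List.length_append, List.length_cons, Finset.length_toList]
    omega

theorem rNat_le_rNat_mul_left (hsym : Symmetric I) (hirr : Irreflexive I)
    (u v w : TraceMonoid A I) : rNat A I v w ≤ rNat A I (u * v) (u * w) := by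
  refine csSup_le_csSup' ⟨(traceLength A I (u * v)).toAdd, ?_⟩ ?_
  · rintro _ ⟨P, L, -, rfl, h, -⟩
    calc P.length ≤ (P ++ L).length := by simp
      _ ≤ _ := h.2 ▸ length_le_traceLength_wProd (isFoataChain_iff.1 h.1).1
  · rintro _ ⟨P, Lv, Lw, rfl, hv, hw⟩
    obtain ⟨Q, hQ, hQL⟩ := exists_prefix_isFNF_mul hsym hirr u (IsFoataChain.of_append hv.1)
    obtain ⟨Lv', hv'⟩ := hQL Lv hv.1
    obtain ⟨Lw', hw'⟩ := hQL Lw hw.1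
    exact ⟨Q, Lv', Lw', hQ, hv.2 ▸ hv', hw.2 ▸ hw'⟩

end Foata

theorem dFNF_mul_left_le_general (A : Type) (I : A → A → Prop)
    (hsym : Symmetric I) (hirr : Irreflexive I) :
    ∀ u v w : TraceMonoid A I, dFNF A I (u * v) (u * w) ≤ dFNF A I v w := by
  intro u v w
  by_cases hvw : v = w
  · simp [hvw, dFNF]
  unfold dFNF
  split_ifs
  · positivity
  · exact zpow_le_zpow_right₀ one_le_two
      (neg_le_neg (Int.ofNat_le.2 (Foata.rNat_le_rNat_mul_left hsym hirr u v w)))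

/-- Left multiplication is a contraction for the Foata normal form metric:
`d(uv, uw) ≤ d(v, w)` for all `u, v, w ∈ M(A,I)`. -/
theorem dFNF_mul_left_le (A : Type) [Fintype A] (I : A → A → Prop)
    (hsym : Symmetric I) (hirr : Irreflexive I) :
    ∀ u v w : TraceMonoid A I, dFNF A I (u * v) (u * w) ≤ dFNF A I v w :=
  dFNF_mul_left_le_general A I hsym hirr
end

section
/- Let M = ℕ^k be a free commutative monoid of finite rank and let φ be a monoid endomorphism of M whose only fixed point is 0. Then for every u ∈ M, the set {x ∈ M : u + φ(x) = x} is finite. -/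
/-!
If `u + φ x = x` then `φ x ≤ x`, and since `φ` is monotone the iterates `φ^[n] x` form a
descending chain. In `ℕ^k` such a chain stabilises, at a fixed point of `φ`, which must be `0`.
Unfolding `x = u + φ x` that many times gives `x = ∑_{i < n} φ^[i] u`, so there is at most one
solution.
-/

open Filter Finset

section CanonicallyOrdered

variable {M N : Type*} [AddCommMonoid M] [PartialOrder M] [CanonicallyOrderedAdd M]
  [AddCommMonoid N] [PartialOrder N] [CanonicallyOrderedAdd N]

theorem AddMonoidHom.monotone_of_canonicallyOrderedAdd (φ : M →+ N) : Monotone φ := by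
  intro a b hab
  obtain ⟨c, rfl⟩ := le_iff_exists_add.mp hab
  rw [map_add]
  exact le_self_add

theorem eventually_iterate_eq_zero_of_map_le [WellFoundedLT M] (φ : M →+ M)
    (hfix : ∀ x, φ x = x → x = 0) {x : M} (hx : φ x ≤ x) :
    ∀ᶠ n in atTop, (⇑φ)^[n] x = 0 := by
  have hmono := φ.monotone_of_canonicallyOrderedAdd
  have hanti : Antitone fun n ↦ (⇑φ)^[n] x := antitone_nat_of_succ_le fun n ↦ by
    rw [Function.iterate_succ_apply]
    exact hmono.iterate n hx
  obtain ⟨n, hn⟩ := WellFoundedLT.antitone_chain_condition hanti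
  have hzero : (⇑φ)^[n] x = 0 :=
    hfix _ ((Function.iterate_succ_apply' _ _ _).symm.trans (hn (n + 1) n.le_succ).symm)
  exact eventually_atTop.mpr ⟨n, fun m hm ↦ (hn m hm).symm.trans hzero⟩

end CanonicallyOrdered

theorem eq_sum_iterate_add_iterate_of_add_map_eq {M : Type*} [AddCommMonoid M] (φ : M →+ M)
    {u x : M} (hx : u + φ x = x) (n : ℕ) :
    x = ∑ i ∈ range n, (⇑φ)^[i] u + (⇑φ)^[n] x := by
  induction n with
  | zero => simp
  | succ n ih =>
    have hstep : (⇑φ)^[n] x = (⇑φ)^[n] u + (⇑φ)^[n + 1] x := by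
      conv_lhs => rw [← hx]
      rw [iterate_map_add, Function.iterate_succ_apply]
    rw [sum_range_succ, add_assoc, ← hstep]
    exact ih

theorem subsingleton_setOf_add_map_eq {M : Type*} [AddCommMonoid M] [PartialOrder M]
    [CanonicallyOrderedAdd M] [WellFoundedLT M] (φ : M →+ M) (hfix : ∀ x, φ x = x → x = 0)
    (u : M) : {x | u + φ x = x}.Subsingleton := by
  intro x (hx : u + φ x = x) y (hy : u + φ y = y)
  have hle {z : M} (hz : u + φ z = z) : φ z ≤ z := le_add_self.trans_eq hz
  obtain ⟨n, hxn, hyn⟩ := ((eventually_iterate_eq_zero_of_map_le φ hfix (hle hx)).and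
    (eventually_iterate_eq_zero_of_map_le φ hfix (hle hy))).exists
  rw [eq_sum_iterate_add_iterate_of_add_map_eq φ hx n,
    eq_sum_iterate_add_iterate_of_add_map_eq φ hy n, hxn, hyn]

/-- Let `M = ℕ^k` be a free commutative monoid of finite rank and let `φ` be a monoid
endomorphism of `M` whose only fixed point is `0`. Then for every `u ∈ M`, the set
`{x ∈ M : u + φ(x) = x}` is finite. -/
theorem finite_solutions_of_fix_trivial (k : ℕ)
    (φ : (Fin k → ℕ) →+ (Fin k → ℕ))
    (hfix : ∀ x : Fin k → ℕ, φ x = x → x = 0) :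
    ∀ u : Fin k → ℕ, {x : Fin k → ℕ | u + φ x = x}.Finite :=
  fun u ↦ (subsingleton_setOf_add_map_eq φ hfix u).finite
end
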